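/- Let B, C, D, E be real matrices (B: m×p, C: m×q, D: n×p, E: n×q) and b, c, d, e ≥ 0 be constants such that ‖B·x‖ ≤ b‖x‖, ‖C·y‖ ≤ c‖y‖, ‖D·x‖ ≤ d‖x‖, ‖E·y‖ ≤ e‖y‖ for all vectors x, y. Then for all x and y, ‖[[B, C],[D, E]]·(x, y)‖² ≤ ((b² + c² + d² + e² + sqrt((b² + c² − d² − e²)² + 4(bd + ce)²))/2)·(‖x‖² + ‖y‖²). -/
import Mathlib


open Matrix

/-- The Euclidean (ℓ²) norm of a finitely-supported real vector. -/
noncomputable def euclNorm {ι : Type*} [Fintype ι] (v : ι → ℝ) : ℝ :=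
  ‖(WithLp.equiv 2 (ι → ℝ)).symm v‖

lemma euclNorm_nonneg' {ι : Type*} [Fintype ι] (v : ι → ℝ) : 0 ≤ euclNorm v :=
  norm_nonneg _

lemma euclNorm_sq' {ι : Type*} [Fintype ι] (v : ι → ℝ) :
    euclNorm v ^ 2 = ∑ i, v i ^ 2 := by
  rw [euclNorm, EuclideanSpace.norm_eq, Real.sq_sqrt (by positivity)]
  simp [sq_abs]

lemma euclNorm_add_le' {ι : Type*} [Fintype ι] (u v : ι → ℝ) :
    euclNorm (u + v) ≤ euclNorm u + euclNorm v := by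
  simpa [euclNorm] using
    norm_add_le ((WithLp.equiv 2 (ι → ℝ)).symm u) ((WithLp.equiv 2 (ι → ℝ)).symm v)

lemma euclNorm_elim_sq' {m n : Type*} [Fintype m] [Fintype n] (u : m → ℝ) (v : n → ℝ) :
    euclNorm (Sum.elim u v) ^ 2 = euclNorm u ^ 2 + euclNorm v ^ 2 := by
  simp [euclNorm_sq', Fintype.sum_sum_type]

lemma key_scalar_bound (b c d e X Y : ℝ) :
    (b*X + c*Y)^2 + (d*X + e*Y)^2 ≤
      ((b ^ 2 + c ^ 2 + d ^ 2 + e ^ 2 +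
            Real.sqrt ((b ^ 2 + c ^ 2 - d ^ 2 - e ^ 2) ^ 2 + 4 * (b * d + c * e) ^ 2)) / 2) *
        (X^2 + Y^2) := by
  set T := Real.sqrt ((b ^ 2 + c ^ 2 - d ^ 2 - e ^ 2) ^ 2 + 4 * (b * d + c * e) ^ 2) with hT
  have hT0 : 0 ≤ T := Real.sqrt_nonneg _
  have hT2 : T ^ 2 = (b ^ 2 + c ^ 2 - d ^ 2 - e ^ 2) ^ 2 + 4 * (b * d + c * e) ^ 2 :=
    Real.sq_sqrt (by positivity)
  set U := b^2 + d^2 - c^2 - e^2 with hU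
  set V := b*c + d*e with hV
  have hUV : T ^ 2 = U ^ 2 + 4 * V ^ 2 := by rw [hT2, hU, hV]; ring
  set L := T * (X^2 + Y^2) with hL
  set R := U * (X^2 - Y^2) + 4 * V * X * Y with hR
  have hL0 : 0 ≤ L := mul_nonneg hT0 (by positivity)
  have hsq : R ^ 2 ≤ L ^ 2 := by
    have h : L ^ 2 - R ^ 2 = (2*U*X*Y - 2*V*(X^2 - Y^2))^2 := by
      rw [hL, hR]; linear_combination (X^2 + Y^2)^2 * hUV
    nlinarith [sq_nonneg (2*U*X*Y - 2*V*(X^2 - Y^2))]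
  have hRL : R ≤ L := by nlinarith [hsq, hL0]
  have hid : ((b ^ 2 + c ^ 2 + d ^ 2 + e ^ 2 + T) / 2) * (X^2 + Y^2)
      - ((b*X + c*Y)^2 + (d*X + e*Y)^2) = (L - R) / 2 := by
    rw [hL, hR, hU, hV]; ring
  linarith [hid, hRL]

/-- **Block 2×2 norm bound ([38, Lemma 9]).** If `‖Bx‖ ≤ b‖x‖`, `‖Cy‖ ≤ c‖y‖`,
`‖Dx‖ ≤ d‖x‖`, `‖Ey‖ ≤ e‖y‖`, then
`‖[[B,C],[D,E]](x,y)‖² ≤ ((b²+c²+d²+e² + sqrt((b²+c²−d²−e²)² + 4(bd+ce)²))/2)·(‖x‖²+‖y‖²)`. -/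
theorem block_two_by_two_norm_bound
    {m n p q : Type*} [Fintype m] [Fintype n] [Fintype p] [Fintype q]
    (B : Matrix m p ℝ) (C : Matrix m q ℝ) (D : Matrix n p ℝ) (E : Matrix n q ℝ)
    (b c d e : ℝ) (hb : 0 ≤ b) (hc : 0 ≤ c) (hd : 0 ≤ d) (he : 0 ≤ e)
    (hB : ∀ x : p → ℝ, euclNorm (B *ᵥ x) ≤ b * euclNorm x)
    (hC : ∀ y : q → ℝ, euclNorm (C *ᵥ y) ≤ c * euclNorm y)
    (hD : ∀ x : p → ℝ, euclNorm (D *ᵥ x) ≤ d * euclNorm x)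
    (hE : ∀ y : q → ℝ, euclNorm (E *ᵥ y) ≤ e * euclNorm y) :
    ∀ (x : p → ℝ) (y : q → ℝ),
      euclNorm (fromBlocks B C D E *ᵥ Sum.elim x y) ^ 2 ≤
        ((b ^ 2 + c ^ 2 + d ^ 2 + e ^ 2 +
            Real.sqrt ((b ^ 2 + c ^ 2 - d ^ 2 - e ^ 2) ^ 2 + 4 * (b * d + c * e) ^ 2)) / 2) *
          (euclNorm x ^ 2 + euclNorm y ^ 2) := by
  intro x y
  set X := euclNorm x with hXdef
  set Y := euclNorm y with hYdef
  have hX : 0 ≤ X := euclNorm_nonneg' x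
  have hY : 0 ≤ Y := euclNorm_nonneg' y
  rw [fromBlocks_mulVec, euclNorm_elim_sq']
  have h1 : euclNorm (B *ᵥ x + C *ᵥ y) ≤ b * X + c * Y :=
    (euclNorm_add_le' _ _).trans (add_le_add (hB x) (hC y))
  have h2 : euclNorm (D *ᵥ x + E *ᵥ y) ≤ d * X + e * Y :=
    (euclNorm_add_le' _ _).trans (add_le_add (hD x) (hE y))
  have h1' : euclNorm (B *ᵥ x + C *ᵥ y) ^ 2 ≤ (b * X + c * Y) ^ 2 :=
    pow_le_pow_left₀ (euclNorm_nonneg' _) h1 2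
  have h2' : euclNorm (D *ᵥ x + E *ᵥ y) ^ 2 ≤ (d * X + e * Y) ^ 2 :=
    pow_le_pow_left₀ (euclNorm_nonneg' _) h2 2
  calc euclNorm (B *ᵥ x + C *ᵥ y) ^ 2 + euclNorm (D *ᵥ x + E *ᵥ y) ^ 2
      ≤ (b * X + c * Y) ^ 2 + (d * X + e * Y) ^ 2 := add_le_add h1' h2'
    _ ≤ _ := key_scalar_bound b c d e X Y
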